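/- Let e = (e^I_μ) be a real 4×4 matrix with det e ≠ 0, let s ∈ {+1,−1}, and define the topological-sector B-field B^{IJ}_{μν} := s (e^I_μ e^J_ν − e^I_ν e^J_μ). Then 𝒱 = 48 det e ≠ 0 and, for ε = ±1, the Urbantke metric satisfies g^{(ε)}_{μν} = (s ε/6) Σ_I e^I_μ e^I_ν. In particular, in the topological sector the two Urbantke metrics are opposite to each other: g^{(+1)}_{μν} + g^{(−1)}_{μν} = 0. -/
import Mathlib

set_option maxHeartbeats 16000000

noncomputable section

/-- The Levi-Civita symbol on `{1,2,3}` (indexed by `Fin 3`), with `ε 0 1 2 = 1`. -/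
def lev3 (a b c : Fin 3) : ℝ :=
  (((b.val : ℝ) - a.val) * ((c.val : ℝ) - a.val) * ((c.val : ℝ) - b.val)) / 2

/-- The Levi-Civita symbol on `{0,1,2,3}` (indexed by `Fin 4`), with `ε 0 1 2 3 = 1`. -/
def eps4 (i j k l : Fin 4) : ℝ :=
  (((j.val : ℝ) - i.val) * ((k.val : ℝ) - i.val) * ((l.val : ℝ) - i.val) *
    ((k.val : ℝ) - j.val) * ((l.val : ℝ) - j.val) * ((l.val : ℝ) - k.val)) / 12

/-- The sign `ε ∈ {+1, −1}` attached to the selfdual (`0`) / anti-selfdual (`1`) labels. -/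
def sgn : Fin 2 → ℝ := fun ε => if ε = 0 then 1 else -1

/-- The selfdual/anti-selfdual generators of `so(4)` in the vector representation
(Euclidean case `σ = 1`): `T^{(±)a,IJ} = ½(−ε^{0aIJ} ± (δ^{aI}δ^{0J} − δ^{0I}δ^{aJ}))`,
the internal index `a ∈ {1,2,3}` being embedded in `{0,1,2,3}` via `a ↦ a+1`. -/
def Tgen (ε : Fin 2) (a : Fin 3) (I J : Fin 4) : ℝ :=
  (1 / 2) * (-(eps4 0 a.succ I J) +
    sgn ε * ((if a.succ = I then (1:ℝ) else 0) * (if (0 : Fin 4) = J then (1:ℝ) else 0) -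
             (if (0 : Fin 4) = I then (1:ℝ) else 0) * (if a.succ = J then (1:ℝ) else 0)))

/-- A B-field: a family `B^{IJ}_{μν}` of real numbers (with both index pairs
understood antisymmetric); `B I J μ ν`. -/
abbrev BField : Type := Fin 4 → Fin 4 → Fin 4 → Fin 4 → ℝ

/-- The selfdual/anti-selfdual components `B^{(ε)a}_{μν} = ∑_{I,J} B^{IJ}_{μν} T^{(ε)a,IJ}`. -/
def Bsd (B : BField) (ε : Fin 2) (a : Fin 3) (μ ν : Fin 4) : ℝ :=
  ∑ I : Fin 4, ∑ J : Fin 4, B I J μ ν * Tgen ε a I J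

/-- The second invariant form on selfdual components: `≺x,y≻ = ∑_{ε,a} ε x^{(ε)a} y^{(ε)a}`. -/
def precSD (x y : Fin 2 → Fin 3 → ℝ) : ℝ := ∑ ε : Fin 2, ∑ a : Fin 3, sgn ε * x ε a * y ε a

/-- The four-dimensional volume `𝒱 = ∑ ε^{μνρσ} ≺B_{μν}, B_{ρσ}≻`. -/
def vol4 (B : BField) : ℝ :=
  ∑ μ : Fin 4, ∑ ν : Fin 4, ∑ ρ : Fin 4, ∑ τ : Fin 4,
    eps4 μ ν ρ τ * precSD (fun ε a => Bsd B ε a μ ν) (fun ε a => Bsd B ε a ρ τ)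

/-- The Urbantke metrics
`g^{(ε)}_{μν} = −(2/(3𝒱)) ∑ ε_{abc} ε^{αβγδ} B^{(ε)a}_{μα} B^{(ε)b}_{βγ} B^{(ε)c}_{δν}`. -/
def urb4 (B : BField) (ε : Fin 2) (μ ν : Fin 4) : ℝ :=
  -(2 / (3 * vol4 B)) *
    ∑ a : Fin 3, ∑ b : Fin 3, ∑ c : Fin 3,
      ∑ α : Fin 4, ∑ β : Fin 4, ∑ γ : Fin 4, ∑ δ : Fin 4,
        lev3 a b c * eps4 α β γ δ * Bsd B ε a μ α * Bsd B ε b β γ * Bsd B ε c δ ν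

/-! ### Auxiliary machinery -/

/-- Closed form of the (anti-)selfdual components of the topological `B`-field. -/
def sig2 (s t : ℝ) (a : Fin 3) (u v : Fin 4 → ℝ) : ℝ :=
  s * (t * (u a.succ * v 0 - u 0 * v a.succ) -
    ∑ b : Fin 3, ∑ c : Fin 3, lev3 a b c * u b.succ * v c.succ)

/-- Flip the sign of the `0`-th component. -/
def neg0 (u : Fin 4 → ℝ) : Fin 4 → ℝ := fun I => if I = 0 then -u I else u I

@[simp] lemma fv0 : ((0:Fin 4):ℕ) = 0 := rfl
@[simp] lemma fv1 : ((1:Fin 4):ℕ) = 1 := rfl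
@[simp] lemma fv2 : ((2:Fin 4):ℕ) = 2 := rfl
@[simp] lemma fv3 : ((3:Fin 4):ℕ) = 3 := rfl
@[simp] lemma gv0 : ((0:Fin 3):ℕ) = 0 := rfl
@[simp] lemma gv1 : ((1:Fin 3):ℕ) = 1 := rfl
@[simp] lemma gv2 : ((2:Fin 3):ℕ) = 2 := rfl
@[simp] lemma fm0 (h) : (⟨0,h⟩:Fin 4) = 0 := rfl
@[simp] lemma fm1 (h) : (⟨1,h⟩:Fin 4) = 1 := rfl
@[simp] lemma fm2 (h) : (⟨2,h⟩:Fin 4) = 2 := rfl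
@[simp] lemma fm3 (h) : (⟨3,h⟩:Fin 4) = 3 := rfl
@[simp] lemma gm0 (h) : (⟨0,h⟩:Fin 3) = 0 := rfl
@[simp] lemma gm1 (h) : (⟨1,h⟩:Fin 3) = 1 := rfl
@[simp] lemma gm2 (h) : (⟨2,h⟩:Fin 3) = 2 := rfl
@[simp] lemma em0 (h) : (⟨0,h⟩:Fin 2) = 0 := rfl
@[simp] lemma em1 (h) : (⟨1,h⟩:Fin 2) = 1 := rfl
@[simp] lemma finsucc0 : Fin.succ (0:Fin 3) = (1:Fin 4) := rfl
@[simp] lemma finsucc1 : Fin.succ (1:Fin 3) = (2:Fin 4) := rfl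
@[simp] lemma finsucc2 : Fin.succ (2:Fin 3) = (3:Fin 4) := rfl
@[simp] lemma fincast0 : Fin.castSucc (0:Fin 3) = (0:Fin 4) := rfl
@[simp] lemma fincast1 : Fin.castSucc (1:Fin 3) = (1:Fin 4) := rfl
@[simp] lemma fincast2 : Fin.castSucc (2:Fin 3) = (2:Fin 4) := rfl

lemma Bsd_closed (e : Matrix (Fin 4) (Fin 4) ℝ) (s : ℝ) (B : BField)
    (hB : ∀ I J μ ν, B I J μ ν = s * (e I μ * e J ν - e I ν * e J μ)) :
    ∀ ε a μ ν, Bsd B ε a μ ν = sig2 s (sgn ε) a (fun I => e I μ) (fun I => e I ν) := by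
  intro ε a μ ν
  unfold Bsd sig2
  simp only [hB]
  fin_cases ε <;> fin_cases a <;>
  · norm_num (config := { decide := true }) [Fin.sum_univ_four, Fin.sum_univ_three,
      Tgen, eps4, lev3, sgn]
    try ring
    try tauto

lemma detKey (e : Matrix (Fin 4) (Fin 4) ℝ) : e.det =
    ∑ I, ∑ J, ∑ K, ∑ L, eps4 I J K L * e I 0 * e J 1 * e K 2 * e L 3 := by
  rw [Matrix.det_succ_row_zero]
  norm_num (config := { decide := true }) [Fin.sum_univ_succ, Matrix.det_fin_three,
    Matrix.submatrix, Fin.sum_univ_four, eps4, Fin.succAbove]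
  ring

lemma volKey (e : Matrix (Fin 4) (Fin 4) ℝ) (s : ℝ) :
    (∑ μ : Fin 4, ∑ ν : Fin 4, ∑ ρ : Fin 4, ∑ τ : Fin 4, eps4 μ ν ρ τ *
      ∑ ε : Fin 2, ∑ a : Fin 3, sgn ε * sig2 s (sgn ε) a (fun I => e I μ) (fun I => e I ν)
        * sig2 s (sgn ε) a (fun I => e I ρ) (fun I => e I τ))
    = 48 * s^2 * e.det := by
  rw [detKey]
  norm_num (config := { decide := true }) [Fin.sum_univ_four, Fin.sum_univ_three,
    Fin.sum_univ_two, sig2, sgn, lev3, eps4]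
  ring

lemma urbKey1 (e : Matrix (Fin 4) (Fin 4) ℝ) (s : ℝ) (u v : Fin 4 → ℝ) :
    (∑ a : Fin 3, ∑ b : Fin 3, ∑ c : Fin 3,
      ∑ α : Fin 4, ∑ β : Fin 4, ∑ γ : Fin 4, ∑ δ : Fin 4,
        lev3 a b c * eps4 α β γ δ * sig2 s 1 a u (fun I => e I α) *
          sig2 s 1 b (fun I => e I β) (fun I => e I γ) * sig2 s 1 c (fun I => e I δ) v)
    = -12 * s^3 * e.det * ∑ I, u I * v I := by
  rw [detKey]
  norm_num (config := { decide := true }) [Fin.sum_univ_four, Fin.sum_univ_three, sig2, lev3, eps4]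
  ring

lemma sig2_neg (s : ℝ) (a : Fin 3) (u v : Fin 4 → ℝ) :
    sig2 s (-1) a u v = sig2 s 1 a (neg0 u) (neg0 v) := by
  unfold sig2 neg0
  fin_cases a <;>
  · norm_num (config := { decide := true }) [Fin.sum_univ_three, lev3]
    try ring
    try tauto

lemma urbKey (e : Matrix (Fin 4) (Fin 4) ℝ) (s t : ℝ) (ht : t = 1 ∨ t = -1)
    (u v : Fin 4 → ℝ) :
    (∑ a : Fin 3, ∑ b : Fin 3, ∑ c : Fin 3,
      ∑ α : Fin 4, ∑ β : Fin 4, ∑ γ : Fin 4, ∑ δ : Fin 4,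
        lev3 a b c * eps4 α β γ δ * sig2 s t a u (fun I => e I α) *
          sig2 s t b (fun I => e I β) (fun I => e I γ) * sig2 s t c (fun I => e I δ) v)
    = -12 * s^3 * t * e.det * ∑ I, u I * v I := by
  rcases ht with rfl | rfl
  · rw [urbKey1 e s u v]; ring
  · set e' : Matrix (Fin 4) (Fin 4) ℝ := Matrix.of fun I μ => if I = 0 then -e I μ else e I μ
      with he'
    have hdet : e'.det = -e.det := by
      have h2 : e' = e.updateRow 0 ((-1 : ℝ) • e 0) := by
        funext I μ
        by_cases h : I = 0 <;> simp [he', Matrix.updateRow_apply, h]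
      rw [h2, Matrix.det_updateRow_smul, Matrix.updateRow_eq_self]; ring
    have hcol : ∀ α : Fin 4, neg0 (fun I => e I α) = fun I => e' I α := by
      intro α; funext I; by_cases h : I = 0 <;> simp [neg0, he', h]
    have hmain :
        (∑ a : Fin 3, ∑ b : Fin 3, ∑ c : Fin 3,
          ∑ α : Fin 4, ∑ β : Fin 4, ∑ γ : Fin 4, ∑ δ : Fin 4,
            lev3 a b c * eps4 α β γ δ * sig2 s (-1) a u (fun I => e I α) *
              sig2 s (-1) b (fun I => e I β) (fun I => e I γ) *
              sig2 s (-1) c (fun I => e I δ) v)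
        = -12 * s^3 * e'.det * ∑ I, neg0 u I * neg0 v I := by
      simp only [sig2_neg, hcol]
      exact urbKey1 e' s (neg0 u) (neg0 v)
    rw [hmain, hdet]
    have hsum : ∑ I, neg0 u I * neg0 v I = ∑ I, u I * v I := by
      norm_num (config := { decide := true }) [Fin.sum_univ_four, neg0]
    rw [hsum]; ring

/-- For a non-degenerate cotetrad `e` and sign `s`, the topological-sector B-field
`B^{IJ}_{μν} = s (e^I_μ e^J_ν − e^I_ν e^J_μ)` has `𝒱 = 48 det e ≠ 0`, and its Urbantke
metrics are `g^{(ε)}_{μν} = (s ε/6) ∑_I e^I_μ e^I_ν`; in particular the two Urbantke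
metrics are opposite to each other: `g^{(+1)} + g^{(−1)} = 0`. -/
theorem urbantke_topological_sector (e : Matrix (Fin 4) (Fin 4) ℝ) (he : e.det ≠ 0)
    (s : ℝ) (hs : s = 1 ∨ s = -1) (B : BField)
    (hB : ∀ I J μ ν, B I J μ ν = s * (e I μ * e J ν - e I ν * e J μ)) :
    vol4 B = 48 * e.det ∧ vol4 B ≠ 0 ∧
    (∀ (ε : Fin 2) (μ ν : Fin 4),
      urb4 B ε μ ν = (s * sgn ε / 6) * ∑ I : Fin 4, e I μ * e I ν) ∧
    (∀ μ ν : Fin 4, urb4 B 0 μ ν + urb4 B 1 μ ν = 0) := by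
  have hBsd := Bsd_closed e s B hB
  have hs2 : s ^ 2 = 1 := by rcases hs with rfl | rfl <;> norm_num
  have hs3 : s ^ 3 = s := by rcases hs with rfl | rfl <;> norm_num
  have hvol : vol4 B = 48 * e.det := by
    have h : vol4 B = 48 * s^2 * e.det := by
      rw [← volKey e s]
      simp only [vol4, precSD, hBsd]
    rw [h, hs2]; ring
  have hne : vol4 B ≠ 0 := by
    rw [hvol]; exact mul_ne_zero (by norm_num) he
  have hurb : ∀ (ε : Fin 2) (μ ν : Fin 4),
      urb4 B ε μ ν = (s * sgn ε / 6) * ∑ I : Fin 4, e I μ * e I ν := by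
    intro ε μ ν
    have hts : sgn ε = 1 ∨ sgn ε = -1 := by fin_cases ε <;> simp [sgn]
    have hK := urbKey e s (sgn ε) hts (fun I => e I μ) (fun I => e I ν)
    simp only [urb4, hBsd, hvol]
    rw [hK, hs3]
    field_simp
    ring
  refine ⟨hvol, hne, hurb, fun μ ν => ?_⟩
  rw [hurb 0 μ ν, hurb 1 μ ν]
  simp [sgn]
  ring
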